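/- The transformation laws of the Weyl-tensor components Ψ⁰_i realize 𝔟𝔪𝔰₄: for i = 1,2,3,4 let Ψ_i ∈ R[u] and set Ψ₅ := 0; define δ_s Ψ_i := −( D_s^{((5−i)/2,(1+i)/2)}Ψ_i + (4−i)(ðf_s)Ψ_{i+1} ), and define the commutator of two such field variations by letting the first variation act on the fields Ψ_j occurring in the second, i.e. δ_{s₁}(δ_{s₂}Ψ_i) := −( D_{s₂}^{((5−i)/2,(1+i)/2)}(δ_{s₁}Ψ_i) + (4−i)(ðf_{s₂})(δ_{s₁}Ψ_{i+1}) ). Then for all symmetry parameters s₁, s₂ and all i = 1,2,3,4, δ_{s₁}(δ_{s₂}Ψ_i) − δ_{s₂}(δ_{s₁}Ψ_i) = δ_{[s₁,s₂]}Ψ_i. -/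

import Mathlib

/-!
Common setup: we work over `ℂ` with flat conformal factor `φ̃ = 0`, so `P = √2` and the
eth operators reduce to `ð = √2 ∂_ζ̄` and `ð̄ = √2 ∂_ζ` on the ring `R[u]` of polynomials
in `u` with coefficients in `R = ℂ[ζ,ζ⁻¹,ζ̄,ζ̄⁻¹]`, which also carries `∂_u`.

`R[u]` is modelled as `RU := AddMonoidAlgebra ℂ (ℤ × ℤ × ℕ)`, the monomial
`single (m,n,k) 1` representing `ζ^m ζ̄^n u^k`; `R` is `AddMonoidAlgebra ℂ (ℤ × ℤ)`, and
`ℂ[ζ,ζ⁻¹]`, `ℂ[ζ̄,ζ̄⁻¹]` are copies of `AddMonoidAlgebra ℂ ℤ`, all included into `RU`.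
-/

/-- `R[u]`, with `single (m,n,k) 1 = ζ^m ζ̄^n u^k`. -/
abbrev RU : Type := AddMonoidAlgebra ℂ (ℤ × ℤ × ℕ)

/-- `R = ℂ[ζ,ζ⁻¹,ζ̄,ζ̄⁻¹]`. -/
abbrev LR : Type := AddMonoidAlgebra ℂ (ℤ × ℤ)

/-- A copy of `ℂ[ζ,ζ⁻¹]` (resp. `ℂ[ζ̄,ζ̄⁻¹]`). -/
abbrev W : Type := AddMonoidAlgebra ℂ ℤ

/-- `ð = √2 ∂_ζ̄` on `R[u]`. -/
noncomputable def eth : RU →ₗ[ℂ] RU :=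
  (AddMonoidAlgebra.coeffLinearEquiv ℂ).symm.toLinearMap ∘ₗ (Finsupp.lsum ℂ fun p : ℤ × ℤ × ℕ =>
    ((Real.sqrt 2 : ℂ) * p.2.1) • Finsupp.lsingle (p.1, p.2.1 - 1, p.2.2)) ∘ₗ (AddMonoidAlgebra.coeffLinearEquiv ℂ).toLinearMap

/-- `ð̄ = √2 ∂_ζ` on `R[u]`. -/
noncomputable def ethBar : RU →ₗ[ℂ] RU :=
  (AddMonoidAlgebra.coeffLinearEquiv ℂ).symm.toLinearMap ∘ₗ (Finsupp.lsum ℂ fun p : ℤ × ℤ × ℕ =>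
    ((Real.sqrt 2 : ℂ) * p.1) • Finsupp.lsingle (p.1 - 1, p.2.1, p.2.2)) ∘ₗ (AddMonoidAlgebra.coeffLinearEquiv ℂ).toLinearMap

/-- `∂_u` on `R[u]`. -/
noncomputable def du : RU →ₗ[ℂ] RU :=
  (AddMonoidAlgebra.coeffLinearEquiv ℂ).symm.toLinearMap ∘ₗ (Finsupp.lsum ℂ fun p : ℤ × ℤ × ℕ =>
    (p.2.2 : ℂ) • Finsupp.lsingle (p.1, p.2.1, p.2.2 - 1)) ∘ₗ (AddMonoidAlgebra.coeffLinearEquiv ℂ).toLinearMap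

/-- The element `u ∈ R[u]`. -/
noncomputable def uVar : RU := AddMonoidAlgebra.single ((0 : ℤ), (0 : ℤ), (1 : ℕ)) (1 : ℂ)

/-- The inclusion `ℂ[ζ̄,ζ̄⁻¹] ↪ R[u]`, `ζ̄^n ↦ ζ̄^n`. -/
noncomputable def incY : W →ₗ[ℂ] RU := (AddMonoidAlgebra.coeffLinearEquiv ℂ).symm.toLinearMap ∘ₗ (Finsupp.lsum ℂ fun n : ℤ => Finsupp.lsingle (0, n, 0)) ∘ₗ (AddMonoidAlgebra.coeffLinearEquiv ℂ).toLinearMap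

/-- The inclusion `ℂ[ζ,ζ⁻¹] ↪ R[u]`, `ζ^m ↦ ζ^m`. -/
noncomputable def incYb : W →ₗ[ℂ] RU := (AddMonoidAlgebra.coeffLinearEquiv ℂ).symm.toLinearMap ∘ₗ (Finsupp.lsum ℂ fun m : ℤ => Finsupp.lsingle (m, 0, 0)) ∘ₗ (AddMonoidAlgebra.coeffLinearEquiv ℂ).toLinearMap

/-- The inclusion `R ↪ R[u]`. -/
noncomputable def incT : LR →ₗ[ℂ] RU :=
  (AddMonoidAlgebra.coeffLinearEquiv ℂ).symm.toLinearMap ∘ₗ (Finsupp.lsum ℂ fun q : ℤ × ℤ => Finsupp.lsingle (q.1, q.2, 0)) ∘ₗ (AddMonoidAlgebra.coeffLinearEquiv ℂ).toLinearMap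

/-- `ð` on the copy `ℂ[ζ̄,ζ̄⁻¹]` (equivalently `ð̄` on the copy `ℂ[ζ,ζ⁻¹]`):
`√2` times the formal derivative. -/
noncomputable def ethW : W →ₗ[ℂ] W :=
  (AddMonoidAlgebra.coeffLinearEquiv ℂ).symm.toLinearMap ∘ₗ (Finsupp.lsum ℂ fun n : ℤ => ((Real.sqrt 2 : ℂ) * n) • Finsupp.lsingle (n - 1)) ∘ₗ (AddMonoidAlgebra.coeffLinearEquiv ℂ).toLinearMap

/-- `ð = √2 ∂_ζ̄` on `R`. -/
noncomputable def ethR : LR →ₗ[ℂ] LR :=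
  (AddMonoidAlgebra.coeffLinearEquiv ℂ).symm.toLinearMap ∘ₗ (Finsupp.lsum ℂ fun q : ℤ × ℤ => ((Real.sqrt 2 : ℂ) * q.2) • Finsupp.lsingle (q.1, q.2 - 1)) ∘ₗ (AddMonoidAlgebra.coeffLinearEquiv ℂ).toLinearMap

/-- `ð̄ = √2 ∂_ζ` on `R`. -/
noncomputable def ethBarR : LR →ₗ[ℂ] LR :=
  (AddMonoidAlgebra.coeffLinearEquiv ℂ).symm.toLinearMap ∘ₗ (Finsupp.lsum ℂ fun q : ℤ × ℤ => ((Real.sqrt 2 : ℂ) * q.1) • Finsupp.lsingle (q.1 - 1, q.2)) ∘ₗ (AddMonoidAlgebra.coeffLinearEquiv ℂ).toLinearMap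

/-- The inclusion `ℂ[ζ̄,ζ̄⁻¹] ↪ R`. -/
noncomputable def jY : W →ₗ[ℂ] LR := (AddMonoidAlgebra.coeffLinearEquiv ℂ).symm.toLinearMap ∘ₗ (Finsupp.lsum ℂ fun n : ℤ => Finsupp.lsingle (0, n)) ∘ₗ (AddMonoidAlgebra.coeffLinearEquiv ℂ).toLinearMap

/-- The inclusion `ℂ[ζ,ζ⁻¹] ↪ R`. -/
noncomputable def jYb : W →ₗ[ℂ] LR := (AddMonoidAlgebra.coeffLinearEquiv ℂ).symm.toLinearMap ∘ₗ (Finsupp.lsum ℂ fun m : ℤ => Finsupp.lsingle (m, 0)) ∘ₗ (AddMonoidAlgebra.coeffLinearEquiv ℂ).toLinearMap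

/-- A symmetry parameter `s = (𝒴, 𝒴̄, T)` with `𝒴 ∈ ℂ[ζ̄,ζ̄⁻¹]`, `𝒴̄ ∈ ℂ[ζ,ζ⁻¹]`
(so that `ð̄𝒴 = 0 = ð𝒴̄`, the conformal Killing equations) and `T ∈ R`. -/
structure SymParam : Type where
  /-- `𝒴`, a function of `ζ̄`. -/
  cY : W
  /-- `𝒴̄`, a function of `ζ`. -/
  cYb : W
  /-- The supertranslation part `T ∈ R`. -/
  T : LR

/-- `ψ_s = ð𝒴 + ð̄𝒴̄ ∈ R`. -/
noncomputable def psiR (s : SymParam) : LR := jY (ethW s.cY) + jYb (ethW s.cYb)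

/-- `f_s = T + (u/2) ψ_s ∈ R[u]`. -/
noncomputable def fOf (s : SymParam) : RU :=
  incT s.T + (1 / 2 : ℂ) • (uVar * incT (psiR s))

/-- The `𝔟𝔪𝔰₄` bracket `[s₁,s₂] = ŝ` on symmetry parameters:
`𝒴̂ = 𝒴₁ð𝒴₂ − 𝒴₂ð𝒴₁`, `𝒴̄̂ = 𝒴̄₁ð̄𝒴̄₂ − 𝒴̄₂ð̄𝒴̄₁`,
`T̂ = 𝒴₁ðT₂ + 𝒴̄₁ð̄T₂ − 𝒴₂ðT₁ − 𝒴̄₂ð̄T₁ − ½(ψ₁T₂ − ψ₂T₁)`. -/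
noncomputable def sBracket (s₁ s₂ : SymParam) : SymParam where
  cY := s₁.cY * ethW s₂.cY - s₂.cY * ethW s₁.cY
  cYb := s₁.cYb * ethW s₂.cYb - s₂.cYb * ethW s₁.cYb
  T := jY s₁.cY * ethR s₂.T + jYb s₁.cYb * ethBarR s₂.T
      - jY s₂.cY * ethR s₁.T - jYb s₂.cYb * ethBarR s₁.T
      - (1 / 2 : ℂ) • (psiR s₁ * s₂.T - psiR s₂ * s₁.T)

/-- The first-order differential operator
`D_s^{(k,k̄)} = f_s∂_u + 𝒴ð + 𝒴̄ð̄ + k(ð𝒴) + k̄(ð̄𝒴̄)` on `R[u]`, the last two terms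
acting by multiplication. -/
noncomputable def Dop (k kb : ℂ) (s : SymParam) : RU →ₗ[ℂ] RU :=
  (LinearMap.mulLeft ℂ (fOf s)).comp du
    + (LinearMap.mulLeft ℂ (incY s.cY)).comp eth
    + (LinearMap.mulLeft ℂ (incYb s.cYb)).comp ethBar
    + k • LinearMap.mulLeft ℂ (eth (incY s.cY))
    + kb • LinearMap.mulLeft ℂ (ethBar (incYb s.cYb))

/-- The transformation law of the Weyl-tensor components:
`δ_s Ψ_i = −( D_s^{((5−i)/2,(1+i)/2)}Ψ_i + (4−i)(ðf_s)Ψ_{i+1} )`. -/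
noncomputable def deltaPsi (s : SymParam) (Ψ : ℕ → RU) (i : ℕ) : RU :=
  -(Dop ((5 - (i : ℂ)) / 2) ((1 + (i : ℂ)) / 2) s (Ψ i)
      + ((4 : ℂ) - (i : ℂ)) • (eth (fOf s) * Ψ (i + 1)))

/-!
Write `D_s^{(k,k̄)} = X_s + w_s` with `X_s = f_s ∂_u + 𝒴 ð + 𝒴̄ ð̄` and `w_s = k ð𝒴 + k̄ ð̄𝒴̄`.
Since `∂_u`, `ð`, `ð̄` are commuting derivations, `X_s` is a derivation and
`[X_{s₁}, X_{s₂}] = X_{[s₁,s₂]}` as soon as every component `c` of the bracket satisfies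
`c_{[s₁,s₂]} = X_{s₁} c_{s₂} - X_{s₂} c_{s₁}`; this holds for `𝒴`, `𝒴̄`, `ψ` and `f`, hence for
`w`, so the operators `D^{(k,k̄)}` close on `𝔟𝔪𝔰₄` for any fixed weights. The coupling term
`(4 - i) (ðf_s) Ψ_{i+1}` is compatible with this because `Ψ_{i+1}` carries the weights of `Ψ_i`
shifted by `(-1/2, 1/2)`, and
`ð f_{[s₁,s₂]} = X_{s₁} ðf_{s₂} - X_{s₂} ðf_{s₁} + h_{s₁} ðf_{s₂} - h_{s₂} ðf_{s₁}` with
`h_s = (ð𝒴 - ð̄𝒴̄)/2` exactly the resulting difference of weight terms.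
-/

open AddMonoidAlgebra

section MonomialOperators

variable {G H : Type*}

theorem coeffConj_lsum_single (φ : G → ℂ →ₗ[ℂ] H →₀ ℂ) (p : G) (c : ℂ) :
    ((coeffLinearEquiv ℂ).symm.toLinearMap ∘ₗ Finsupp.lsum ℂ φ ∘ₗ
      (coeffLinearEquiv ℂ).toLinearMap) (single p c : ℂ[G]) = ofCoeff (φ p c) := by
  simp

theorem coeffConj_lsum_smul_single (σ : G → H) (χ : G → ℂ) (p : G) (c : ℂ) :
    ((coeffLinearEquiv ℂ).symm.toLinearMap ∘ₗ Finsupp.lsum ℂ (fun p => χ p • Finsupp.lsingle (σ p))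
      ∘ₗ (coeffLinearEquiv ℂ).toLinearMap) (single p c : ℂ[G]) = single (σ p) (χ p * c) :=
  (coeffConj_lsum_single _ p c).trans (congrArg ofCoeff (Finsupp.smul_single' _ _ _))

theorem eq_of_map_single {M : Type*} [AddCommMonoid M] [Module ℂ M] {f g : ℂ[G] →ₗ[ℂ] M}
    (h : ∀ p c, f (single p c) = g (single p c)) (x : ℂ[G]) : f x = g x :=
  LinearMap.congr_fun (lhom_ext' fun p => LinearMap.ext fun c => h p c) x

variable [AddCommMonoid G] [AddCommMonoid H]

/-- `hσ` is only required where `χ p ≠ 0`, so that `∂_u`, which lowers an `ℕ`-exponent with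
truncated subtraction, qualifies. -/
theorem leibniz_of_map_single (L : ℂ[G] →ₗ[ℂ] ℂ[G]) (σ : G → G) (χ : G → ℂ)
    (hL : ∀ p c, L (single p c) = single (σ p) (χ p * c))
    (hχ : ∀ p q, χ (p + q) = χ p + χ q) (hσ : ∀ p q, χ p ≠ 0 → σ p + q = σ (p + q))
    (a b : ℂ[G]) : L (a * b) = L a * b + a * L b := by
  have shift (p q : G) (c : ℂ) : single (σ p + q) (χ p * c) = single (σ (p + q)) (χ p * c) := by
    by_cases hp : χ p = 0
    · simp [hp]
    · rw [hσ p q hp]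
  induction a using AddMonoidAlgebra.induction_linear with
  | zero => simp
  | add x y hx hy => simp only [add_mul, map_add, hx, hy]; ring
  | single p c =>
    induction b using AddMonoidAlgebra.induction_linear with
    | zero => simp
    | add x y hx hy => simp only [mul_add, map_add, hx, hy]; ring
    | single q d =>
      simp only [single_mul_single, hL]
      rw [mul_assoc, mul_left_comm c, add_comm p (σ q), shift, shift, add_comm q p, ← single_add,
        hχ, add_mul]

theorem comm_of_map_single (L₁ L₂ : ℂ[G] →ₗ[ℂ] ℂ[G]) (σ₁ σ₂ : G → G) (χ₁ χ₂ : G → ℂ)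
    (hL₁ : ∀ p c, L₁ (single p c) = single (σ₁ p) (χ₁ p * c))
    (hL₂ : ∀ p c, L₂ (single p c) = single (σ₂ p) (χ₂ p * c))
    (hσ : ∀ p, σ₁ (σ₂ p) = σ₂ (σ₁ p)) (hχ₁ : ∀ p, χ₁ (σ₂ p) = χ₁ p)
    (hχ₂ : ∀ p, χ₂ (σ₁ p) = χ₂ p) (x : ℂ[G]) : L₁ (L₂ x) = L₂ (L₁ x) := by
  induction x using AddMonoidAlgebra.induction_linear with
  | zero => simp
  | add x y hx hy => simp only [map_add, hx, hy]
  | single p c => rw [hL₂, hL₁, hL₁, hL₂, hσ, hχ₁, hχ₂, mul_left_comm]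

theorem map_mul_of_map_single (L : ℂ[G] →ₗ[ℂ] ℂ[H]) (φ : G →+ H)
    (hL : ∀ p c, L (single p c) = single (φ p) c) (a b : ℂ[G]) : L (a * b) = L a * L b := by
  induction a using AddMonoidAlgebra.induction_linear with
  | zero => simp
  | add x y hx hy => simp only [add_mul, map_add, hx, hy]
  | single p c =>
    induction b using AddMonoidAlgebra.induction_linear with
    | zero => simp
    | add x y hx hy => simp only [mul_add, map_add, hx, hy]
    | single q d => rw [single_mul_single, hL, hL, hL, single_mul_single, map_add]

end MonomialOperators

theorem eth_single (m n : ℤ) (k : ℕ) (c : ℂ) :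
    eth (single (m, n, k) c) = single (m, n - 1, k) ((Real.sqrt 2 : ℂ) * n * c) :=
  coeffConj_lsum_smul_single _ _ _ _

theorem ethBar_single (m n : ℤ) (k : ℕ) (c : ℂ) :
    ethBar (single (m, n, k) c) = single (m - 1, n, k) ((Real.sqrt 2 : ℂ) * m * c) :=
  coeffConj_lsum_smul_single _ _ _ _

theorem du_single (m n : ℤ) (k : ℕ) (c : ℂ) :
    du (single (m, n, k) c) = single (m, n, k - 1) (k * c) :=
  coeffConj_lsum_smul_single _ _ _ _

theorem ethW_single (n : ℤ) (c : ℂ) :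
    ethW (single n c) = single (n - 1) ((Real.sqrt 2 : ℂ) * n * c) :=
  coeffConj_lsum_smul_single _ _ _ _

theorem ethR_single (q : ℤ × ℤ) (c : ℂ) :
    ethR (single q c) = single (q.1, q.2 - 1) ((Real.sqrt 2 : ℂ) * q.2 * c) :=
  coeffConj_lsum_smul_single _ _ _ _

theorem ethBarR_single (q : ℤ × ℤ) (c : ℂ) :
    ethBarR (single q c) = single (q.1 - 1, q.2) ((Real.sqrt 2 : ℂ) * q.1 * c) :=
  coeffConj_lsum_smul_single _ _ _ _

theorem incY_single (n : ℤ) (c : ℂ) : incY (single n c) = single (0, n, 0) c :=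
  coeffConj_lsum_single _ _ _

theorem incYb_single (m : ℤ) (c : ℂ) : incYb (single m c) = single (m, 0, 0) c :=
  coeffConj_lsum_single _ _ _

theorem incT_single (q : ℤ × ℤ) (c : ℂ) : incT (single q c) = single (q.1, q.2, 0) c :=
  coeffConj_lsum_single _ _ _

theorem jY_single (n : ℤ) (c : ℂ) : jY (single n c) = single (0, n) c :=
  coeffConj_lsum_single _ _ _

theorem jYb_single (m : ℤ) (c : ℂ) : jYb (single m c) = single (m, 0) c :=
  coeffConj_lsum_single _ _ _

theorem eth_mul (a b : RU) : eth (a * b) = eth a * b + a * eth b :=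
  leibniz_of_map_single eth _ _ (fun p c => eth_single p.1 p.2.1 p.2.2 c)
    (fun p q => by simp only [Prod.fst_add, Prod.snd_add]; push_cast; ring) (fun p q _ => by ext <;> simp; ring)
    a b

theorem ethBar_mul (a b : RU) : ethBar (a * b) = ethBar a * b + a * ethBar b :=
  leibniz_of_map_single ethBar _ _ (fun p c => ethBar_single p.1 p.2.1 p.2.2 c)
    (fun p q => by simp only [Prod.fst_add]; push_cast; ring) (fun p q _ => by ext <;> simp; ring)
    a b

theorem du_mul (a b : RU) : du (a * b) = du a * b + a * du b :=
  leibniz_of_map_single du _ _ (fun p c => du_single p.1 p.2.1 p.2.2 c)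
    (fun p q => by simp only [Prod.snd_add]; push_cast; ring) (fun p q hp => by have := Nat.cast_ne_zero.mp hp; ext <;> simp; omega)
    a b

theorem eth_du (x : RU) : eth (du x) = du (eth x) :=
  comm_of_map_single eth du _ _ _ _ (fun p c => eth_single p.1 p.2.1 p.2.2 c)
    (fun p c => du_single p.1 p.2.1 p.2.2 c) (fun _ => rfl) (fun _ => rfl) (fun _ => rfl) x

theorem ethBar_du (x : RU) : ethBar (du x) = du (ethBar x) :=
  comm_of_map_single ethBar du _ _ _ _ (fun p c => ethBar_single p.1 p.2.1 p.2.2 c)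
    (fun p c => du_single p.1 p.2.1 p.2.2 c) (fun _ => rfl) (fun _ => rfl) (fun _ => rfl) x

theorem ethBar_eth (x : RU) : ethBar (eth x) = eth (ethBar x) :=
  comm_of_map_single ethBar eth _ _ _ _ (fun p c => ethBar_single p.1 p.2.1 p.2.2 c)
    (fun p c => eth_single p.1 p.2.1 p.2.2 c) (fun _ => rfl) (fun _ => rfl) (fun _ => rfl) x

theorem eth_incY (w : W) : eth (incY w) = incY (ethW w) :=
  eq_of_map_single (f := eth ∘ₗ incY) (g := incY ∘ₗ ethW) (fun n c => by
    simp only [LinearMap.comp_apply, incY_single, eth_single, ethW_single]) w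

theorem ethBar_incY (w : W) : ethBar (incY w) = 0 :=
  eq_of_map_single (f := ethBar ∘ₗ incY) (g := 0) (fun n c => by
    simp only [LinearMap.comp_apply, LinearMap.zero_apply, incY_single, ethBar_single, Int.cast_zero, mul_zero,
      zero_mul, single_zero]) w

theorem du_incY (w : W) : du (incY w) = 0 :=
  eq_of_map_single (f := du ∘ₗ incY) (g := 0) (fun n c => by
    simp only [LinearMap.comp_apply, LinearMap.zero_apply, incY_single, du_single, Nat.cast_zero, zero_mul,
      single_zero]) w

theorem ethBar_incYb (w : W) : ethBar (incYb w) = incYb (ethW w) :=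
  eq_of_map_single (f := ethBar ∘ₗ incYb) (g := incYb ∘ₗ ethW) (fun n c => by
    simp only [LinearMap.comp_apply, incYb_single, ethBar_single, ethW_single]) w

theorem eth_incYb (w : W) : eth (incYb w) = 0 :=
  eq_of_map_single (f := eth ∘ₗ incYb) (g := 0) (fun n c => by
    simp only [LinearMap.comp_apply, LinearMap.zero_apply, incYb_single, eth_single, Int.cast_zero, mul_zero,
      zero_mul, single_zero]) w

theorem du_incYb (w : W) : du (incYb w) = 0 :=
  eq_of_map_single (f := du ∘ₗ incYb) (g := 0) (fun n c => by
    simp only [LinearMap.comp_apply, LinearMap.zero_apply, incYb_single, du_single, Nat.cast_zero, zero_mul,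
      single_zero]) w

theorem eth_incT (t : LR) : eth (incT t) = incT (ethR t) :=
  eq_of_map_single (f := eth ∘ₗ incT) (g := incT ∘ₗ ethR) (fun p c => by
    simp only [LinearMap.comp_apply, incT_single, eth_single, ethR_single]) t

theorem ethBar_incT (t : LR) : ethBar (incT t) = incT (ethBarR t) :=
  eq_of_map_single (f := ethBar ∘ₗ incT) (g := incT ∘ₗ ethBarR) (fun p c => by
    simp only [LinearMap.comp_apply, incT_single, ethBar_single, ethBarR_single]) t

theorem du_incT (t : LR) : du (incT t) = 0 :=
  eq_of_map_single (f := du ∘ₗ incT) (g := 0) (fun p c => by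
    simp only [LinearMap.comp_apply, LinearMap.zero_apply, incT_single, du_single, Nat.cast_zero, zero_mul,
      single_zero]) t

theorem incT_jY (w : W) : incT (jY w) = incY w :=
  eq_of_map_single (f := incT ∘ₗ jY) (g := incY) (fun n c => by
    simp only [LinearMap.comp_apply, jY_single, incT_single, incY_single]) w

theorem incT_jYb (w : W) : incT (jYb w) = incYb w :=
  eq_of_map_single (f := incT ∘ₗ jYb) (g := incYb) (fun n c => by
    simp only [LinearMap.comp_apply, jYb_single, incT_single, incYb_single]) w

theorem incY_mul (a b : W) : incY (a * b) = incY a * incY b :=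
  map_mul_of_map_single incY ((AddMonoidHom.inr ℤ (ℤ × ℕ)).comp (AddMonoidHom.inl ℤ ℕ))
    incY_single a b

theorem incYb_mul (a b : W) : incYb (a * b) = incYb a * incYb b :=
  map_mul_of_map_single incYb (AddMonoidHom.inl ℤ (ℤ × ℕ)) incYb_single a b

theorem incT_mul (a b : LR) : incT (a * b) = incT a * incT b :=
  map_mul_of_map_single incT ((AddMonoidHom.id ℤ).prodMap (AddMonoidHom.inl ℤ ℕ))
    incT_single a b

theorem du_uVar : du uVar = 1 := by
  rw [uVar, du_single, Nat.cast_one, one_mul]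
  rfl

theorem eth_uVar : eth uVar = 0 := by simp [uVar, eth_single]

theorem ethBar_uVar : ethBar uVar = 0 := by simp [uVar, ethBar_single]

noncomputable def psi (s : SymParam) : RU := eth (incY s.cY) + ethBar (incYb s.cYb)

theorem incT_psiR (s : SymParam) : incT (psiR s) = psi s := by
  rw [psiR, map_add, incT_jY, incT_jYb, psi, eth_incY, ethBar_incYb]

theorem fOf_eq (s : SymParam) : fOf s = incT s.T + (1 / 2 : ℂ) • (uVar * psi s) := by
  rw [fOf, incT_psiR]

theorem incY_sBracket (s₁ s₂ : SymParam) :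
    incY (sBracket s₁ s₂).cY = incY s₁.cY * eth (incY s₂.cY) - incY s₂.cY * eth (incY s₁.cY) := by
  simp only [sBracket, map_sub, incY_mul, eth_incY]

theorem incYb_sBracket (s₁ s₂ : SymParam) :
    incYb (sBracket s₁ s₂).cYb =
      incYb s₁.cYb * ethBar (incYb s₂.cYb) - incYb s₂.cYb * ethBar (incYb s₁.cYb) := by
  simp only [sBracket, map_sub, incYb_mul, ethBar_incYb]

theorem incT_sBracket (s₁ s₂ : SymParam) :
    incT (sBracket s₁ s₂).T =
      incY s₁.cY * eth (incT s₂.T) + incYb s₁.cYb * ethBar (incT s₂.T)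
        - incY s₂.cY * eth (incT s₁.T) - incYb s₂.cYb * ethBar (incT s₁.T)
        - (1 / 2 : ℂ) • (psi s₁ * incT s₂.T - psi s₂ * incT s₁.T) := by
  simp only [sBracket, map_sub, map_add, map_smul, incT_mul, incT_jY, incT_jYb, incT_psiR,
    eth_incT, ethBar_incT]

noncomputable def vectorField (s : SymParam) : RU →ₗ[ℂ] RU :=
  (LinearMap.mulLeft ℂ (fOf s)).comp du + (LinearMap.mulLeft ℂ (incY s.cY)).comp eth
    + (LinearMap.mulLeft ℂ (incYb s.cYb)).comp ethBar

theorem vectorField_apply (s : SymParam) (x : RU) :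
    vectorField s x = fOf s * du x + incY s.cY * eth x + incYb s.cYb * ethBar x :=
  rfl

theorem vectorField_mul (s : SymParam) (a b : RU) :
    vectorField s (a * b) = vectorField s a * b + a * vectorField s b := by
  simp only [vectorField_apply, du_mul, eth_mul, ethBar_mul]
  ring

theorem vectorField_incY (s : SymParam) (w : W) :
    vectorField s (incY w) = incY s.cY * eth (incY w) := by
  simp only [vectorField_apply, du_incY, ethBar_incY, mul_zero, zero_add, add_zero]

theorem vectorField_incYb (s : SymParam) (w : W) :
    vectorField s (incYb w) = incYb s.cYb * ethBar (incYb w) := by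
  simp only [vectorField_apply, du_incYb, eth_incYb, mul_zero, zero_add, add_zero]

theorem eth_incY_sBracket (s₁ s₂ : SymParam) :
    eth (incY (sBracket s₁ s₂).cY) =
      vectorField s₁ (eth (incY s₂.cY)) - vectorField s₂ (eth (incY s₁.cY)) := by
  simp only [incY_sBracket, eth_incY, vectorField_incY, map_sub, eth_mul]
  ring

theorem ethBar_incYb_sBracket (s₁ s₂ : SymParam) :
    ethBar (incYb (sBracket s₁ s₂).cYb) =
      vectorField s₁ (ethBar (incYb s₂.cYb)) - vectorField s₂ (ethBar (incYb s₁.cYb)) := by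
  simp only [incYb_sBracket, ethBar_incYb, vectorField_incYb, map_sub, ethBar_mul]
  ring

theorem psi_sBracket (s₁ s₂ : SymParam) :
    psi (sBracket s₁ s₂) = vectorField s₁ (psi s₂) - vectorField s₂ (psi s₁) := by
  simp only [psi, map_add, eth_incY_sBracket, ethBar_incYb_sBracket]
  ring

theorem du_psi (s : SymParam) : du (psi s) = 0 := by
  rw [psi, map_add, ← eth_du, ← ethBar_du, du_incY, du_incYb, map_zero, map_zero, add_zero]

theorem du_fOf (s : SymParam) : du (fOf s) = (1 / 2 : ℂ) • psi s := by
  rw [fOf_eq, map_add, map_smul, du_mul, du_incT, du_uVar, du_psi]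
  ring_nf

theorem vectorField_uVar (s : SymParam) : vectorField s uVar = fOf s := by
  simp only [vectorField_apply, du_uVar, eth_uVar, ethBar_uVar, mul_one, mul_zero, add_zero]

theorem vectorField_incT (s : SymParam) (t : LR) :
    vectorField s (incT t) = incY s.cY * eth (incT t) + incYb s.cYb * ethBar (incT t) := by
  simp only [vectorField_apply, du_incT, mul_zero, zero_add]

theorem fOf_sBracket (s₁ s₂ : SymParam) :
    fOf (sBracket s₁ s₂) = vectorField s₁ (fOf s₂) - vectorField s₂ (fOf s₁) := by
  conv_rhs => rw [fOf_eq s₂, fOf_eq s₁]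
  simp only [map_add, map_smul, vectorField_mul, vectorField_uVar, vectorField_incT]
  rw [fOf_eq, incT_sBracket, psi_sBracket, fOf_eq, fOf_eq]
  simp only [Algebra.smul_def]
  ring

theorem vectorField_commutator (s₁ s₂ : SymParam) (x : RU) :
    vectorField s₁ (vectorField s₂ x) - vectorField s₂ (vectorField s₁ x) =
      vectorField (sBracket s₁ s₂) x := by
  rw [vectorField_apply (sBracket s₁ s₂), fOf_sBracket, incY_sBracket, incYb_sBracket]
  simp only [vectorField_apply, map_add, du_mul, eth_mul, ethBar_mul, eth_du, ethBar_du,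
    ethBar_eth, du_incY, ethBar_incY, du_incYb, eth_incYb]
  ring

noncomputable def weight (k kb : ℂ) (s : SymParam) : RU :=
  k • eth (incY s.cY) + kb • ethBar (incYb s.cYb)

theorem Dop_apply (k kb : ℂ) (s : SymParam) (x : RU) :
    Dop k kb s x = vectorField s x + weight k kb s * x := by
  simp only [Dop, vectorField, weight, LinearMap.add_apply, LinearMap.smul_apply,
    LinearMap.mulLeft_apply, add_mul, smul_mul_assoc, add_assoc]

theorem weight_sBracket (k kb : ℂ) (s₁ s₂ : SymParam) :
    weight k kb (sBracket s₁ s₂) =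
      vectorField s₁ (weight k kb s₂) - vectorField s₂ (weight k kb s₁) := by
  simp only [weight, eth_incY_sBracket, ethBar_incYb_sBracket, map_add, map_smul, smul_sub]
  abel

theorem Dop_commutator (k kb : ℂ) (s₁ s₂ : SymParam) (x : RU) :
    Dop k kb s₁ (Dop k kb s₂ x) - Dop k kb s₂ (Dop k kb s₁ x) = Dop k kb (sBracket s₁ s₂) x := by
  simp only [Dop_apply, map_add, vectorField_mul, weight_sBracket, ← vectorField_commutator]
  ring

theorem Dop_mul (k kb : ℂ) (s : SymParam) (g x : RU) :
    Dop k kb s (g * x) = vectorField s g * x + g * Dop k kb s x := by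
  simp only [Dop_apply, vectorField_mul]
  ring

theorem Dop_sub_add (k kb a : ℂ) (s : SymParam) (x : RU) :
    Dop (k - a) (kb + a) s x = Dop k kb s x - weight a (-a) s * x := by
  simp only [Dop_apply, weight, sub_smul, add_smul, neg_smul]
  ring

theorem eth_vectorField (s : SymParam) (x : RU) :
    eth (vectorField s x) =
      vectorField s (eth x) + eth (fOf s) * du x + eth (incY s.cY) * eth x := by
  simp only [vectorField_apply, map_add, eth_mul, eth_incYb, eth_du, ethBar_eth]
  ring

theorem eth_fOf_sBracket (s₁ s₂ : SymParam) :
    eth (fOf (sBracket s₁ s₂)) =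
      vectorField s₁ (eth (fOf s₂)) - vectorField s₂ (eth (fOf s₁))
        + weight (1 / 2) (-(1 / 2)) s₁ * eth (fOf s₂)
        - weight (1 / 2) (-(1 / 2)) s₂ * eth (fOf s₁) := by
  rw [fOf_sBracket, map_sub, eth_vectorField, eth_vectorField, du_fOf, du_fOf]
  simp only [weight, psi, mul_add, add_mul, smul_mul_assoc, mul_smul_comm, smul_add]
  simp only [mul_comm (eth (fOf _))]
  module

theorem deltaPsi_realizes_bms4_general (s₁ s₂ : SymParam) (Ψ : ℕ → RU) (i : ℕ) :
    deltaPsi s₂ (fun j => deltaPsi s₁ Ψ j) i - deltaPsi s₁ (fun j => deltaPsi s₂ Ψ j) i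
      = deltaPsi (sBracket s₁ s₂) Ψ i := by
  have hk : (5 - ((i + 1 : ℕ) : ℂ)) / 2 = (5 - i) / 2 - 1 / 2 := by push_cast; ring
  have hkb : (1 + ((i + 1 : ℕ) : ℂ)) / 2 = (1 + i) / 2 + 1 / 2 := by push_cast; ring
  simp only [deltaPsi, hk, hkb, Dop_sub_add, map_neg, map_add, map_smul, Dop_mul,
    eth_fOf_sBracket, ← Dop_commutator]
  simp only [Algebra.smul_def]
  ring

/-- The transformation laws of the Weyl-tensor components `Ψ⁰_i`
realize `𝔟𝔪𝔰₄`: for fields `Ψ_i ∈ R[u]`, `i = 1,2,3,4`, with `Ψ₅ := 0`, and with the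
commutator of two field variations defined by letting the first variation act on the
fields occurring in the second, i.e.
`δ_{s₁}(δ_{s₂}Ψ_i) := −( D_{s₂}^{((5−i)/2,(1+i)/2)}(δ_{s₁}Ψ_i) + (4−i)(ðf_{s₂})(δ_{s₁}Ψ_{i+1}) )`,
one has `δ_{s₁}(δ_{s₂}Ψ_i) − δ_{s₂}(δ_{s₁}Ψ_i) = δ_{[s₁,s₂]}Ψ_i` for all symmetry
parameters `s₁, s₂` and all `i = 1,2,3,4`. -/
theorem deltaPsi_realizes_bms4 (s₁ s₂ : SymParam) (Ψ : ℕ → RU) (hΨ : Ψ 5 = 0)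
    (i : ℕ) (hi₁ : 1 ≤ i) (hi₄ : i ≤ 4) :
    deltaPsi s₂ (fun j => deltaPsi s₁ Ψ j) i - deltaPsi s₁ (fun j => deltaPsi s₂ Ψ j) i
      = deltaPsi (sBracket s₁ s₂) Ψ i :=
  deltaPsi_realizes_bms4_general s₁ s₂ Ψ i
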